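/- arXiv:2510.25450 — 5 statements merged into one kernel-verified Lean document; each statement's English description precedes it below -/
import Mathlib

section
/- Let A, B, C be abelian categories, F : A ⥤ C a right exact functor, and G : B ⥤ C a left exact functor. Then the comma category Comma F G is an abelian category. -/
/-!
Right and left exact functors between abelian categories are additive, so `Comma F G` is
preadditive. Kernels in `Comma F G` are computed componentwise because `G` preserves them, and
cokernels because `F` does. Hence both projections preserve kernels and cokernels, so the
components of the coimage-image comparison of a morphism of `Comma F G` are, up to isomorphism,
coimage-image comparisons in the abelian categories `A` and `B`, hence invertible; and a morphism
of `Comma F G` with invertible components is invertible.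
-/

open CategoryTheory CategoryTheory.Limits

namespace CategoryTheory.Comma

variable {A B T : Type*} [Category A] [Category B] [Category T] (L : A ⥤ T) (R : B ⥤ T)

lemma isIso_of_isIso_left_of_isIso_right {X Y : Comma L R} (f : X ⟶ Y)
    [IsIso f.left] [IsIso f.right] : IsIso f :=
  (Comma.isoMk (asIso f.left) (asIso f.right) f.w).isIso_hom

variable {J : Type*} [Category J] [HasLimitsOfShape J A] [HasLimitsOfShape J B]
  [PreservesLimitsOfShape J R]

instance preservesLimitsOfShape_fst : PreservesLimitsOfShape J (Comma.fst L R) where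
  preservesLimit :=
    preservesLimit_of_preserves_limit_cone
      (coneOfPreservesIsLimit _ (limit.isLimit _) (limit.isLimit _)) (limit.isLimit _)

instance preservesLimitsOfShape_snd : PreservesLimitsOfShape J (Comma.snd L R) where
  preservesLimit :=
    preservesLimit_of_preserves_limit_cone
      (coneOfPreservesIsLimit _ (limit.isLimit _) (limit.isLimit _)) (limit.isLimit _)

end CategoryTheory.Comma

namespace CategoryTheory.Abelian

lemma isIso_map_coimageImageComparison {C D : Type*} [Category C] [Category D]
    [HasZeroMorphisms C] [HasKernels C] [HasCokernels C]
    [HasZeroMorphisms D] [HasKernels D] [HasCokernels D]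
    (H : C ⥤ D) [H.PreservesZeroMorphisms]
    [PreservesLimitsOfShape WalkingParallelPair H] [PreservesColimitsOfShape WalkingParallelPair H]
    {X Y : C} (f : X ⟶ Y) [IsIso (coimageImageComparison (H.map f))] :
    IsIso (H.map (coimageImageComparison f)) :=
  IsIso.of_isIso_fac_right (PreservesCoimage.hom_coimageImageComparison H f).symm

end CategoryTheory.Abelian

namespace CategoryTheory.Comma

variable {A B T : Type*} [Category A] [Category B] [Category T]
  [Abelian A] [Abelian B] [Preadditive T]
  (L : A ⥤ T) [L.Additive] [PreservesColimitsOfShape WalkingParallelPair L]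
  (R : B ⥤ T) [R.Additive] [PreservesLimitsOfShape WalkingParallelPair R]

instance isIso_coimageImageComparison {X Y : Comma L R} (f : X ⟶ Y) :
    IsIso (Abelian.coimageImageComparison f) := by
  have : IsIso (Abelian.coimageImageComparison f).left :=
    Abelian.isIso_map_coimageImageComparison (Comma.fst L R) f
  have : IsIso (Abelian.coimageImageComparison f).right :=
    Abelian.isIso_map_coimageImageComparison (Comma.snd L R) f
  exact isIso_of_isIso_left_of_isIso_right L R _

end CategoryTheory.Comma

/-- Let `A`, `B`, `C` be abelian categories, `F : A ⥤ C` a right exact functor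
(preserving finite colimits) and `G : B ⥤ C` a left exact functor (preserving finite
limits). Then the comma category `Comma F G` is an abelian category. -/
theorem comma_abelian {A B C : Type*} [Category A] [Category B] [Category C]
    [Abelian A] [Abelian B] [Abelian C]
    (F : A ⥤ C) [PreservesFiniteColimits F] (G : B ⥤ C) [PreservesFiniteLimits G] :
    Nonempty (Abelian (Comma F G)) := by
  have : F.Additive := rightExactFunctor_le_additiveFunctor A C F ((rightExactFunctor_iff F).2 ‹_›)
  have : G.Additive := leftExactFunctor_le_additiveFunctor B C G ((leftExactFunctor_iff G).2 ‹_›)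
  exact ⟨Abelian.ofCoimageImageComparisonIsIso⟩
end

section
/- Let Comma F G be abelian as in the main theorem. If a morphism (f,g) in Comma F G is an epimorphism, then f is an epimorphism in A and g is an epimorphism in B. -/
open CategoryTheory CategoryTheory.Limits

/-! Both projections out of `Comma F G` preserve pushouts, since pushouts in the comma category
are computed componentwise once `F` preserves them; functors preserving pushouts preserve
epimorphisms. -/

namespace CategoryTheory.Comma

variable {A B T : Type*} [Category A] [Category B] [Category T] {L : A ⥤ T} {R : B ⥤ T}
  [HasPushouts A] [HasPushouts B] [PreservesColimitsOfShape WalkingSpan L]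

theorem epi_left_of_epi {X Y : Comma L R} (f : X ⟶ Y) [Epi f] : Epi f.left :=
  (fst L R).map_epi f

theorem epi_right_of_epi {X Y : Comma L R} (f : X ⟶ Y) [Epi f] : Epi f.right :=
  (snd L R).map_epi f

end CategoryTheory.Comma

theorem comma_epi_components_general {A B C : Type*} [Category A] [Category B] [Category C]
    [Abelian A] [Abelian B]
    (F : A ⥤ C) [PreservesFiniteColimits F] (G : B ⥤ C)
    {X Y : Comma F G} (φ : X ⟶ Y) (hφ : Epi φ) :
    Epi φ.left ∧ Epi φ.right :=
  ⟨Comma.epi_left_of_epi φ, Comma.epi_right_of_epi φ⟩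

/-- With `A`, `B`, `C` abelian, `F : A ⥤ C` right exact and `G : B ⥤ C` left exact
(so that `Comma F G` is abelian), if a morphism `(f, g)` of `Comma F G` is an
epimorphism, then `f` is an epimorphism in `A` and `g` is an epimorphism in `B`. -/
theorem comma_epi_components {A B C : Type*} [Category A] [Category B] [Category C]
    [Abelian A] [Abelian B] [Abelian C]
    (F : A ⥤ C) [PreservesFiniteColimits F] (G : B ⥤ C) [PreservesFiniteLimits G]
    {X Y : Comma F G} (φ : X ⟶ Y) (hφ : Epi φ) :
    Epi φ.left ∧ Epi φ.right :=
  comma_epi_components_general F G φ hφ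
end

section
/- Let Comma F G be abelian as in the main theorem. For every object (A,B,α), the sequence 0 → (0, B, 0) → (A, B, α) → (A, 0, 0) → 0, with maps (0, id_B) and (id_A, 0), is a short exact sequence in Comma F G. Consequently [(A,B,α)] = [(A,B,0)] in the Grothendieck group K(Comma F G). -/
/-!
The abelian structure on `Comma F G` is arbitrary, but `(0, 0, 0)` is a zero object of it (as
`F 0` and `G 0` are zero), so the projection `(A, B, α) ↦ A` preserves zero morphisms. Hence a
morphism `k` killed by `(id_A, 0)` has `k.left = 0`, and then `(0, k.right)` is a morphism into
`(0, B, 0)`: this makes `(0, id_B)` a kernel of `(id_A, 0)`. The resulting short exact sequences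
for `(A, B, α)` and `(A, B, 0)` have the same end terms, so the two classes agree in `K(Comma F G)`.
-/

open CategoryTheory CategoryTheory.Limits

/-- The subgroup of relations defining the Grothendieck group of an abelian category:
generated by `[X₂] - [X₁] - [X₃]` for each short exact sequence `0 → X₁ → X₂ → X₃ → 0`. -/
def grothendieckRelations (D : Type*) [Category D] [Abelian D] :
    AddSubgroup (FreeAbelianGroup D) :=
  AddSubgroup.closure {x | ∃ S : ShortComplex D, S.ShortExact ∧
    x = FreeAbelianGroup.of S.X₂ - FreeAbelianGroup.of S.X₁ - FreeAbelianGroup.of S.X₃}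

/-- The Grothendieck group `K(D)` of an abelian category `D`. -/
def K0 (D : Type*) [Category D] [Abelian D] : Type _ :=
  FreeAbelianGroup D ⧸ grothendieckRelations D

noncomputable instance (D : Type*) [Category D] [Abelian D] : AddCommGroup (K0 D) :=
  inferInstanceAs (AddCommGroup (FreeAbelianGroup D ⧸ grothendieckRelations D))

/-- The class `[X]` of an object `X` in the Grothendieck group. -/
def K0.mk {D : Type*} [Category D] [Abelian D] (X : D) : K0 D :=
  QuotientAddGroup.mk (FreeAbelianGroup.of X)

open ZeroObject

section
variable {A B C : Type*} [Category A] [Category B] [Category C]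
  [Abelian A] [Abelian B] [Abelian C]
  (F : A ⥤ C) [PreservesFiniteColimits F] (G : B ⥤ C) [PreservesFiniteLimits G]

/-- `F.obj 0` is a zero object when `F` preserves finite colimits. -/
lemma isZero_F_obj_zero : IsZero (F.obj (0 : A)) :=
  (isZero_zero C).of_iso
    ((HasZeroObject.zeroIsInitial.isInitialObj F 0).uniqueUpToIso HasZeroObject.zeroIsInitial)

/-- `G.obj 0` is a zero object when `G` preserves finite limits. -/
lemma isZero_G_obj_zero : IsZero (G.obj (0 : B)) :=
  (isZero_zero C).of_iso
    ((HasZeroObject.zeroIsTerminal.isTerminalObj G 0).uniqueUpToIso HasZeroObject.zeroIsTerminal)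

/-- The object `(0, B, 0)` of the comma category. -/
noncomputable def leftZeroObj (X : Comma F G) : Comma F G :=
  { left := 0, right := X.right, hom := 0 }

/-- The object `(A, 0, 0)` of the comma category. -/
noncomputable def rightZeroObj (X : Comma F G) : Comma F G :=
  { left := X.left, right := 0, hom := 0 }

/-- The morphism `(0, id_B) : (0, B, 0) ⟶ (A, B, α)`. -/
noncomputable def inclMor (X : Comma F G) : leftZeroObj F G X ⟶ X :=
  { left := 0
    right := 𝟙 X.right
    w := (isZero_F_obj_zero F).eq_of_src _ _ }

/-- The morphism `(id_A, 0) : (A, B, α) ⟶ (A, 0, 0)`. -/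
noncomputable def projMor (X : Comma F G) : X ⟶ rightZeroObj F G X :=
  { left := 𝟙 X.left
    right := 0
    w := (isZero_G_obj_zero G).eq_of_tgt _ _ }

namespace CategoryTheory.Comma

variable {C₁ C₂ T : Type*} [Category C₁] [Category C₂] [Category T] {L : C₁ ⥤ T} {R : C₂ ⥤ T}

lemma isZero_of_isZero_left_right {X : Comma L R} (hl : IsZero X.left) (hr : IsZero X.right)
    (hL : IsZero (L.obj X.left)) (hR : IsZero (R.obj X.right)) : IsZero X where
  unique_to _ := ⟨⟨⟨{ left := hl.to_ _, right := hr.to_ _, w := hL.eq_of_src _ _ }⟩,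
    fun _ => hom_ext _ _ (hl.eq_of_src _ _) (hr.eq_of_src _ _)⟩⟩
  unique_from _ := ⟨⟨⟨{ left := hl.from_ _, right := hr.from_ _, w := hR.eq_of_tgt _ _ }⟩,
    fun _ => hom_ext _ _ (hl.eq_of_tgt _ _) (hr.eq_of_tgt _ _)⟩⟩

lemma epi_of_epi_left_of_epi_right {X Y : Comma L R} (f : X ⟶ Y) [Epi f.left] [Epi f.right] :
    Epi f where
  left_cancellation _ _ h := hom_ext _ _
    ((cancel_epi f.left).1 (congrArg CommaMorphism.left h))
    ((cancel_epi f.right).1 (congrArg CommaMorphism.right h))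

section ZeroMorphisms

variable [HasZeroMorphisms C₁] [HasZeroObject C₁] [HasZeroMorphisms C₂] [HasZeroObject C₂]
  [HasZeroMorphisms T] [HasZeroObject T] [L.PreservesZeroMorphisms] [R.PreservesZeroMorphisms]

lemma isZero_mk_zero : IsZero (Comma.mk (L := L) (R := R) 0 0 0) :=
  isZero_of_isZero_left_right (isZero_zero C₁) (isZero_zero C₂)
    ((isZero_zero T).of_iso L.mapZeroObject) ((isZero_zero T).of_iso R.mapZeroObject)

variable [HasZeroMorphisms (Comma L R)] [HasZeroObject (Comma L R)]

instance : (fst L R).PreservesZeroMorphisms :=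
  Functor.preservesZeroMorphisms_of_map_zero_object
    ((fst L R).mapIso ((isZero_zero _).iso isZero_mk_zero))

@[simp]
lemma zero_left (X Y : Comma L R) : (0 : X ⟶ Y).left = 0 :=
  (fst L R).map_zero X Y

end ZeroMorphisms

end CategoryTheory.Comma

lemma K0.mk_eq_add_of_shortExact {D : Type*} [Category D] [Abelian D] {S : ShortComplex D}
    (hS : S.ShortExact) : K0.mk S.X₂ = K0.mk S.X₁ + K0.mk S.X₃ := by
  rw [← sub_eq_zero, ← sub_sub]
  exact (QuotientAddGroup.eq_zero_iff _).2 (AddSubgroup.subset_closure ⟨S, hS, rfl⟩)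

section Kernel

variable [Abelian (Comma F G)] (X : Comma F G)

lemma inclMor_comp_projMor : inclMor F G X ≫ projMor F G X = 0 :=
  Comma.hom_ext _ _ ((isZero_zero A).eq_of_src _ _) ((isZero_zero B).eq_of_tgt _ _)

lemma left_eq_zero_of_comp_projMor_eq_zero {W : Comma F G} {k : W ⟶ X}
    (hk : k ≫ projMor F G X = 0) : k.left = 0 := by
  have h := congrArg CommaMorphism.left hk
  rw [Comma.comp_left, Comma.zero_left] at h
  exact (Category.comp_id k.left).symm.trans h

noncomputable def liftInclMor {W : Comma F G} (k : W ⟶ X) (hk : k ≫ projMor F G X = 0) :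
    W ⟶ leftZeroObj F G X where
  left := 0
  right := k.right
  w := by
    have hw := k.w
    rw [left_eq_zero_of_comp_projMor_eq_zero F G X hk, F.map_zero, zero_comp] at hw
    simpa [leftZeroObj] using hw

noncomputable def isLimitInclMor :
    IsLimit (KernelFork.ofι (inclMor F G X) (inclMor_comp_projMor F G X)) :=
  KernelFork.IsLimit.ofι _ _ (liftInclMor F G X)
    (fun _ hk => Comma.hom_ext _ _
      (zero_comp.trans (left_eq_zero_of_comp_projMor_eq_zero F G X hk).symm)
      (Category.comp_id _))
    (fun _ _ m hm => Comma.hom_ext _ _ ((isZero_zero A).eq_of_tgt _ _)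
      ((Category.comp_id m.right).symm.trans (congrArg CommaMorphism.right hm)))

lemma shortExact_inclMor_projMor :
    (ShortComplex.mk (inclMor F G X) (projMor F G X) (inclMor_comp_projMor F G X)).ShortExact where
  exact := ShortComplex.exact_of_f_is_kernel _ (isLimitInclMor F G X)
  mono_f := mono_of_isLimit_fork (isLimitInclMor F G X)
  epi_g :=
    have : Epi (projMor F G X).left := inferInstanceAs (Epi (𝟙 X.left))
    have : Epi (projMor F G X).right := ⟨fun _ _ _ => (isZero_zero B).eq_of_src _ _⟩
    Comma.epi_of_epi_left_of_epi_right (projMor F G X)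

lemma K0.mk_eq_mk_leftZeroObj_add_mk_rightZeroObj :
    K0.mk X = K0.mk (leftZeroObj F G X) + K0.mk (rightZeroObj F G X) :=
  K0.mk_eq_add_of_shortExact (shortExact_inclMor_projMor F G X)

end Kernel

/-- For every object `(A, B, α)` of the abelian comma category `Comma F G`, the
sequence `0 → (0, B, 0) → (A, B, α) → (A, 0, 0) → 0`, with maps `(0, id_B)` and
`(id_A, 0)`, is a short exact sequence; consequently `[(A,B,α)] = [(A,B,0)]` in the
Grothendieck group `K(Comma F G)`. -/
theorem comma_shortExact_and_K0_eq [Abelian (Comma F G)] :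
    ∀ X : Comma F G,
      ∃ h0 : inclMor F G X ≫ projMor F G X = 0,
        (ShortComplex.mk (inclMor F G X) (projMor F G X) h0).ShortExact ∧
        K0.mk X = K0.mk ({ left := X.left, right := X.right, hom := 0 } : Comma F G) := by
  intro X
  refine ⟨inclMor_comp_projMor F G X, shortExact_inclMor_projMor F G X, ?_⟩
  rw [K0.mk_eq_mk_leftZeroObj_add_mk_rightZeroObj F G X,
    K0.mk_eq_mk_leftZeroObj_add_mk_rightZeroObj F G ⟨X.left, X.right, 0⟩]
  rfl

end
end

section
/- Let Z_A : K(A) → ℂ and Z_B : K(B) → ℂ be stability functions on abelian categories A and B, and let x, y > 0 be real numbers. Then Z : K(Comma F G) → ℂ defined by Z([(A,B,α)]) = x·Z_A([A]) + y·Z_B([B]) is a stability function on the abelian comma category Comma F G. -/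
open CategoryTheory CategoryTheory.Limits

/-- A stability function on an abelian category `D`: an additive homomorphism
`Z : K(D) → ℂ` such that every nonzero object `X` satisfies `Im Z([X]) ≥ 0`, and
`Im Z([X]) = 0` implies `Re Z([X]) < 0`. -/
def IsStabilityFunction {D : Type*} [Category D] [Abelian D] (Z : K0 D →+ ℂ) : Prop :=
  ∀ X : D, ¬ IsZero X →
    0 ≤ (Z (K0.mk X)).im ∧ ((Z (K0.mk X)).im = 0 → (Z (K0.mk X)).re < 0)

/-!
The values of a stability function on nonzero objects lie in the upper half-plane with the
open negative real axis added, a set closed under addition and under multiplication by positive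
reals. A nonzero comma object has a nonzero component, and the class of a zero component
vanishes, so `Z [X]` is a positive combination of one or two such values.
-/

lemma K0.mk_eq_zero_of_isZero {D : Type*} [Category D] [Abelian D] {X : D} (hX : IsZero X) :
    K0.mk X = 0 := by
  have hS : (ShortComplex.mk (0 : X ⟶ X) (0 : X ⟶ X) (by simp)).ShortExact :=
    { exact := ShortComplex.exact_of_isZero_X₂ _ hX
      mono_f := hX.mono _
      epi_g := hX.epi _ }
  have hrel : -FreeAbelianGroup.of X ∈ grothendieckRelations D :=
    AddSubgroup.subset_closure ⟨_, hS, by abel⟩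
  exact (QuotientAddGroup.eq_zero_iff _).mpr (by simpa using neg_mem hrel)

/-- The triple `(0, 0, F 0 → G 0)` is initial, and an initial object is zero as soon as there
are zero morphisms. -/
lemma Comma.isZero_of_isZero_left_of_isZero_right {A B C : Type*} [Category A] [Category B]
    [Category C] [HasZeroMorphisms A] [HasZeroMorphisms C] {F : A ⥤ C} [F.PreservesZeroMorphisms]
    {G : B ⥤ C} [HasZeroMorphisms (Comma F G)] {X : Comma F G} (hl : IsZero X.left)
    (hr : IsZero X.right) : IsZero X :=
  IsInitial.isZero <| IsInitial.ofUniqueHom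
    (fun Y => ⟨hl.to_ Y.left, hr.to_ Y.right, (F.map_isZero hl).eq_of_src _ _⟩)
    fun _ _ => CommaMorphism.ext (hl.eq_of_src _ _) (hr.eq_of_src _ _)

def semiClosedUpperHalfPlane : Set ℂ :=
  {z | 0 ≤ z.im ∧ (z.im = 0 → z.re < 0)}

lemma add_mem_semiClosedUpperHalfPlane {z w : ℂ} (hz : z ∈ semiClosedUpperHalfPlane)
    (hw : w ∈ semiClosedUpperHalfPlane) : z + w ∈ semiClosedUpperHalfPlane := by
  obtain ⟨hz_im, hz_re⟩ := hz
  obtain ⟨hw_im, hw_re⟩ := hw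
  refine ⟨by simpa using add_nonneg hz_im hw_im, fun h => ?_⟩
  have hz0 : z.im = 0 := by simp only [Complex.add_im] at h; linarith
  have hw0 : w.im = 0 := by simp only [Complex.add_im] at h; linarith
  simpa using add_neg (hz_re hz0) (hw_re hw0)

lemma ofReal_mul_mem_semiClosedUpperHalfPlane {r : ℝ} (hr : 0 < r) {z : ℂ}
    (hz : z ∈ semiClosedUpperHalfPlane) : (r : ℂ) * z ∈ semiClosedUpperHalfPlane := by
  obtain ⟨hz_im, hz_re⟩ := hz
  refine ⟨by simpa using mul_nonneg hr.le hz_im, fun h => ?_⟩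
  have hz0 : z.im = 0 := by simpa [hr.ne'] using h
  simpa using mul_neg_of_pos_of_neg hr (hz_re hz0)

lemma isStabilityFunction_iff {D : Type*} [Category D] [Abelian D] (Z : K0 D →+ ℂ) :
    IsStabilityFunction Z ↔ ∀ X : D, ¬IsZero X → Z (K0.mk X) ∈ semiClosedUpperHalfPlane :=
  Iff.rfl

theorem comma_stabilityFunction_general {A B C : Type*} [Category A] [Category B] [Category C]
    [Abelian A] [Abelian B] [Abelian C]
    (F : A ⥤ C) [PreservesFiniteColimits F] (G : B ⥤ C)
    [Abelian (Comma F G)]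
    (ZA : K0 A →+ ℂ) (ZB : K0 B →+ ℂ)
    (hZA : IsStabilityFunction ZA) (hZB : IsStabilityFunction ZB)
    (x y : ℝ) (hx : 0 < x) (hy : 0 < y)
    (Z : K0 (Comma F G) →+ ℂ)
    (hZ : ∀ X : Comma F G,
      Z (K0.mk X) = (x : ℂ) * ZA (K0.mk X.left) + (y : ℂ) * ZB (K0.mk X.right)) :
    IsStabilityFunction Z := by
  rw [isStabilityFunction_iff] at hZA hZB ⊢
  intro X hX
  rw [hZ]
  by_cases hl : IsZero X.left
  · have hr : ¬IsZero X.right := fun hr => hX (Comma.isZero_of_isZero_left_of_isZero_right hl hr)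
    rw [K0.mk_eq_zero_of_isZero hl, map_zero, mul_zero, zero_add]
    exact ofReal_mul_mem_semiClosedUpperHalfPlane hy (hZB _ hr)
  by_cases hr : IsZero X.right
  · rw [K0.mk_eq_zero_of_isZero hr, map_zero, mul_zero, add_zero]
    exact ofReal_mul_mem_semiClosedUpperHalfPlane hx (hZA _ hl)
  exact add_mem_semiClosedUpperHalfPlane (ofReal_mul_mem_semiClosedUpperHalfPlane hx (hZA _ hl))
    (ofReal_mul_mem_semiClosedUpperHalfPlane hy (hZB _ hr))

/-- Let `Z_A`, `Z_B` be stability functions on abelian categories `A` and `B`, and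
`x, y > 0` real numbers. Then `Z : K(Comma F G) → ℂ` defined by
`Z([(A,B,α)]) = x·Z_A([A]) + y·Z_B([B])` is a stability function on the abelian
comma category `Comma F G`. -/
theorem comma_stabilityFunction {A B C : Type*} [Category A] [Category B] [Category C]
    [Abelian A] [Abelian B] [Abelian C]
    (F : A ⥤ C) [PreservesFiniteColimits F] (G : B ⥤ C) [PreservesFiniteLimits G]
    [Abelian (Comma F G)]
    (ZA : K0 A →+ ℂ) (ZB : K0 B →+ ℂ)
    (hZA : IsStabilityFunction ZA) (hZB : IsStabilityFunction ZB)
    (x y : ℝ) (hx : 0 < x) (hy : 0 < y)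
    (Z : K0 (Comma F G) →+ ℂ)
    (hZ : ∀ X : Comma F G,
      Z (K0.mk X) = (x : ℂ) * ZA (K0.mk X.left) + (y : ℂ) * ZB (K0.mk X.right)) :
    IsStabilityFunction Z :=
  comma_stabilityFunction_general F G ZA ZB hZA hZB x y hx hy Z hZ
end

section
/- Let A, B, C be abelian categories, F : A ⥤ C right exact, G : B ⥤ C left exact. The comma category Comma F G is artinian (every object satisfies the descending chain condition on subobjects) if and only if both A and B are artinian. -/
/-!
A monomorphism of `Comma F G` has monic components: the right one by testing against objects
`(0, Z, 0)`, which needs `F` to preserve zero morphisms, and then the left one because `G`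
preserves monomorphisms. Hence a subobject of `(X, Y, h)` is determined by its two components,
its structure map being forced, and `Subobject (X, Y, h)` order-embeds into
`Subobject X × Subobject Y`, which is well founded when `A` and `B` are artinian. Conversely
`X ↦ (X, 0, 0)` and `Y ↦ (0, Y, 0)` are fully faithful and preserve monomorphisms, so they
embed the subobject lattices of `A` and `B` into those of `Comma F G`.
-/

open CategoryTheory CategoryTheory.Limits

open ZeroObject

namespace CategoryTheory

section

variable {D E : Type*} [Category D] [Category E]

lemma isArtinianObject_of_orderEmbedding {X : D} {α : Type*} [Preorder α] [WellFoundedLT α]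
    (e : Subobject X ↪o α) : IsArtinianObject X :=
  (isArtinianObject.is_iff X).2 e.wellFoundedLT

lemma Functor.isArtinianObject_of_fullyFaithful (L : D ⥤ E) [L.Full] [L.Faithful]
    [L.PreservesMonomorphisms] (X : D) [IsArtinianObject (L.obj X)] : IsArtinianObject X :=
  isArtinianObject_of_orderEmbedding <|
    OrderEmbedding.ofMapLEIff (fun S : Subobject X ↦ Subobject.mk (L.map S.arrow)) fun S T ↦ by
      constructor
      · intro h
        refine Subobject.le_of_comm (L.preimage (Subobject.ofMkLEMk _ _ h)) (L.map_injective ?_)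
        simp [Subobject.ofMkLEMk_comp]
      · intro h
        exact Subobject.mk_le_mk_of_comm (L.map (Subobject.ofLE S T h))
          (by rw [← L.map_comp, Subobject.ofLE_arrow])

end

namespace Comma

variable {A B C : Type*} [Category A] [Category B] [Category C] {L : A ⥤ C} {R : B ⥤ C}

lemma mono_of_mono_left_of_mono_right {S X : Comma L R} (f : S ⟶ X) [Mono f.left]
    [Mono f.right] : Mono f where
  right_cancellation u v h := by
    ext
    · exact (cancel_mono f.left).1 (congrArg CommaMorphism.left h)
    · exact (cancel_mono f.right).1 (congrArg CommaMorphism.right h)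

instance mono_right_of_mono [HasZeroObject A] [HasZeroMorphisms A] [HasZeroMorphisms C]
    [L.PreservesZeroMorphisms] {S X : Comma L R} (f : S ⟶ X) [Mono f] : Mono f.right where
  right_cancellation {Z} g₁ g₂ h := by
    let T : Comma L R := ⟨0, Z, 0⟩
    let u₁ : T ⟶ S := ⟨0, g₁, by simp [T]⟩
    let u₂ : T ⟶ S := ⟨0, g₂, by simp [T]⟩
    have : u₁ ≫ f = u₂ ≫ f := by ext; simp [u₁, u₂, h]
    exact congrArg CommaMorphism.right ((cancel_mono f).1 this)

instance mono_left_of_mono [R.PreservesMonomorphisms] {S X : Comma L R} (f : S ⟶ X) [Mono f]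
    [Mono f.right] : Mono f.left where
  right_cancellation {Z} g₁ g₂ h := by
    -- `g₁` and `g₂` induce the same structure map `L Z ⟶ R S.right` after cancelling `R f.right`
    have hom_eq : L.map g₁ ≫ S.hom = L.map g₂ ≫ S.hom := by
      rw [← cancel_mono (R.map f.right), Category.assoc, Category.assoc, ← f.w,
        ← L.map_comp_assoc, ← L.map_comp_assoc, h]
    let T : Comma L R := ⟨Z, S.right, L.map g₁ ≫ S.hom⟩
    let u₁ : T ⟶ S := ⟨g₁, 𝟙 _, by simp [T]⟩
    let u₂ : T ⟶ S := ⟨g₂, 𝟙 _, by simp [T, hom_eq]⟩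
    have : u₁ ≫ f = u₂ ≫ f := by ext <;> simp [u₁, u₂, h]
    exact congrArg CommaMorphism.left ((cancel_mono f).1 this)

variable (L R)

@[simps]
noncomputable def leftInclusion [HasZeroObject B] [HasZeroMorphisms C] : A ⥤ Comma L R where
  obj X := ⟨X, 0, 0⟩
  map f := ⟨f, 𝟙 0, by simp⟩

@[simps]
noncomputable def rightInclusion [HasZeroObject A] [HasZeroMorphisms C] : B ⥤ Comma L R where
  obj Y := ⟨0, Y, 0⟩
  map g := ⟨𝟙 0, g, by simp⟩

section

variable [HasZeroObject B] [HasZeroMorphisms C]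

instance : (leftInclusion L R).Faithful where
  map_injective h := congrArg CommaMorphism.left h

instance : (leftInclusion L R).Full where
  map_surjective φ := ⟨φ.left, by ext; exacts [rfl, (isZero_zero B).eq_of_src _ _]⟩

instance : (leftInclusion L R).PreservesMonomorphisms where
  preserves f _ := by
    have : Mono ((leftInclusion L R).map f).left := inferInstanceAs (Mono f)
    have : Mono ((leftInclusion L R).map f).right := inferInstanceAs (Mono (𝟙 _))
    exact mono_of_mono_left_of_mono_right _

end

section

variable [HasZeroObject A] [HasZeroMorphisms C]

instance : (rightInclusion L R).Faithful where
  map_injective h := congrArg CommaMorphism.right h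

instance : (rightInclusion L R).Full where
  map_surjective φ := ⟨φ.right, by ext; exacts [(isZero_zero A).eq_of_src _ _, rfl]⟩

instance : (rightInclusion L R).PreservesMonomorphisms where
  preserves f _ := by
    have : Mono ((rightInclusion L R).map f).left := inferInstanceAs (Mono (𝟙 _))
    have : Mono ((rightInclusion L R).map f).right := inferInstanceAs (Mono f)
    exact mono_of_mono_left_of_mono_right _

end

variable {L R} [HasZeroObject A] [HasZeroMorphisms A] [HasZeroMorphisms C]
  [L.PreservesZeroMorphisms] [R.PreservesMonomorphisms]

lemma subobject_le_iff {X : Comma L R} {S T : Subobject X} :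
    S ≤ T ↔ Subobject.mk S.arrow.left ≤ Subobject.mk T.arrow.left ∧
      Subobject.mk S.arrow.right ≤ Subobject.mk T.arrow.right := by
  constructor
  · intro h
    have hST := Subobject.ofLE_arrow h
    exact ⟨Subobject.mk_le_mk_of_comm _ (congrArg CommaMorphism.left hST),
      Subobject.mk_le_mk_of_comm _ (congrArg CommaMorphism.right hST)⟩
  · rintro ⟨hl, hr⟩
    have hl' := Subobject.ofMkLEMk_comp hl
    have hr' := Subobject.ofMkLEMk_comp hr
    -- checked after composing with the mono `R.map T.arrow.right`
    have w : L.map (Subobject.ofMkLEMk _ _ hl) ≫ (T : Comma L R).hom =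
        (S : Comma L R).hom ≫ R.map (Subobject.ofMkLEMk _ _ hr) := by
      rw [← cancel_mono (R.map T.arrow.right), Category.assoc, ← T.arrow.w, ← L.map_comp_assoc,
        hl', Category.assoc, ← R.map_comp, hr', S.arrow.w]
    exact Subobject.le_of_comm ⟨_, _, w⟩ (by ext <;> simp [hl', hr'])

noncomputable def subobjectEmbedding (X : Comma L R) : Subobject X ↪o Subobject X.left × Subobject X.right :=
  OrderEmbedding.ofMapLEIff (fun S ↦ (Subobject.mk S.arrow.left, Subobject.mk S.arrow.right))
    fun _ _ ↦ subobject_le_iff.symm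

end Comma

end CategoryTheory

/-- Let `A`, `B`, `C` be abelian categories, `F : A ⥤ C` right exact and
`G : B ⥤ C` left exact. The comma category `Comma F G` is artinian (every object
satisfies the descending chain condition on subobjects) if and only if both `A` and
`B` are artinian. -/
theorem comma_artinian_iff {A B C : Type*} [Category A] [Category B] [Category C]
    [Abelian A] [Abelian B] [Abelian C]
    (F : A ⥤ C) [PreservesFiniteColimits F] (G : B ⥤ C) [PreservesFiniteLimits G] :
    (∀ X : Comma F G, IsArtinianObject X) ↔
      (∀ X : A, IsArtinianObject X) ∧ (∀ Y : B, IsArtinianObject Y) := by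
  constructor
  · intro h
    refine ⟨fun X ↦ ?_, fun Y ↦ ?_⟩
    · have := h ((Comma.leftInclusion F G).obj X)
      exact (Comma.leftInclusion F G).isArtinianObject_of_fullyFaithful X
    · have := h ((Comma.rightInclusion F G).obj Y)
      exact (Comma.rightInclusion F G).isArtinianObject_of_fullyFaithful Y
  · rintro ⟨hA, hB⟩ X
    exact isArtinianObject_of_orderEmbedding X.subobjectEmbedding
end
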